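/- arXiv:1601.08013 — 2 statements merged into one kernel-verified Lean document; each statement's English description precedes it below -/
import Mathlib

section
/- Let H ∈ (0, 1/2). There exists a constant C > 0 depending only on H such that for all h ∈ ℝ and all t > 0, ∫_0^t ∫_ℝ (1 - cos(hξ)) e^{-sξ²} |ξ|^{1-2H} dξ ds ≤ C |h|^{2H}. -/
/-!
Since `1 - cos x ≤ min 2 x²`, the integrand is dominated by a nonnegative function, so the
time integral may be extended to `(0, ∞)` and exchanged with the frequency integral (Tonelli).
Integrating the heat factor in time gives `∫₀^∞ e^{-sξ²} ds = ξ⁻²`, leaving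
`∫ min 2 (hξ)² |ξ|^{-1-2H} dξ`, which is finite for `0 < H < 1/2` (the factor `min 2 ξ²` tames
the singularity at `0`, the decay `|ξ|^{-1-2H}` the tails) and equals `|h|^{2H}` times its
value at `h = 1` by the substitution `η = hξ`.
-/

open MeasureTheory Real Set

lemma one_sub_cos_le_min_two_sq (x : ℝ) : 1 - cos x ≤ min 2 (x ^ 2) :=
  le_min (by linarith [neg_one_le_cos x]) (by nlinarith [one_sub_sq_div_two_le_cos (x := x)])

lemma abs_rpow_div_sq {q : ℝ} (hq : q ≠ 2) (x : ℝ) : |x| ^ q / x ^ 2 = |x| ^ (q - 2) := by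
  rw [← sq_abs, ← rpow_natCast, rpow_sub' (abs_nonneg x) (by contrapose! hq; linarith)]
  norm_num

lemma ofReal_integral_le_lintegral_ofReal {α : Type*} [MeasurableSpace α] {μ : Measure α}
    {f : α → ℝ} (hf : ∀ a, 0 ≤ f a) :
    ENNReal.ofReal (∫ a, f a ∂μ) ≤ ∫⁻ a, ENNReal.ofReal (f a) ∂μ :=
  calc ENNReal.ofReal (∫ a, f a ∂μ) = ‖∫ a, f a ∂μ‖ₑ :=
        (Real.enorm_of_nonneg (integral_nonneg hf)).symm
    _ ≤ ∫⁻ a, ‖f a‖ₑ ∂μ := enorm_integral_le_lintegral_enorm f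
    _ = ∫⁻ a, ENNReal.ofReal (f a) ∂μ := by simp_rw [Real.enorm_of_nonneg (hf _)]

lemma MeasureTheory.IntegrableOn.integrable_comp_abs {E : Type*} [NormedAddCommGroup E] {f : ℝ → E}
    (hf : IntegrableOn f (Ioi 0)) : Integrable fun x => f |x| := by
  have hpos : IntegrableOn (fun x => f |x|) (Ioi 0) :=
    hf.congr_fun (fun x hx => by rw [abs_of_pos hx]) measurableSet_Ioi
  have hneg : IntegrableOn (fun x => f |x|) (Iio 0) := by
    have h := (show IntegrableOn (fun x => f |x|) (Ioi (-0)) by rwa [neg_zero]).comp_neg_Iio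
    simpa only [abs_neg] using h
  rw [← integrableOn_univ, ← Iio_union_Ici]
  exact hneg.union ((integrableOn_Ici_iff_integrableOn_Ioi enorm_ne_top).2 hpos)

lemma integrableOn_Ioi_min_two_sq_mul_rpow {p : ℝ} (hp₁ : -3 < p) (hp₂ : p < -1) (h : ℝ) :
    IntegrableOn (fun x : ℝ => min 2 ((h * x) ^ 2) * x ^ p) (Ioi 0) := by
  have hmeas : AEStronglyMeasurable (fun x : ℝ => min 2 ((h * x) ^ 2) * x ^ p) := by
    fun_prop
  have hnear : IntegrableOn (fun x : ℝ => min 2 ((h * x) ^ 2) * x ^ p) (Ioc 0 1) := by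
    have hdom : IntegrableOn (fun x : ℝ => h ^ 2 * x ^ (p + 2)) (Ioc 0 1) :=
      (intervalIntegral.intervalIntegrable_rpow' (a := 0) (b := 1) (by linarith)).1.const_mul _
    refine hdom.mono' hmeas.restrict ?_
    filter_upwards [ae_restrict_mem measurableSet_Ioc] with x hx
    have hx₀ : 0 < x := hx.1
    rw [norm_of_nonneg (by positivity), rpow_add hx₀, rpow_two]
    calc min 2 ((h * x) ^ 2) * x ^ p ≤ (h * x) ^ 2 * x ^ p := by gcongr; exact min_le_right _ _
      _ = h ^ 2 * (x ^ p * x ^ 2) := by ring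
  have hfar : IntegrableOn (fun x : ℝ => min 2 ((h * x) ^ 2) * x ^ p) (Ioi 1) := by
    refine ((integrableOn_Ioi_rpow_of_lt hp₂ one_pos).const_mul 2).mono' hmeas.restrict ?_
    filter_upwards [ae_restrict_mem measurableSet_Ioi] with x (hx : 1 < x)
    have hx₀ : 0 < x := by linarith
    rw [norm_of_nonneg (by positivity)]
    gcongr
    exact min_le_left _ _
  rw [← Ioc_union_Ioi_eq_Ioi zero_le_one]
  exact hnear.union hfar

lemma integrable_min_two_sq_mul_abs_rpow {p : ℝ} (hp₁ : -3 < p) (hp₂ : p < -1) (h : ℝ) :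
    Integrable fun ξ : ℝ => min 2 ((h * ξ) ^ 2) * |ξ| ^ p := by
  simpa only [mul_pow, sq_abs] using
    (integrableOn_Ioi_min_two_sq_mul_rpow hp₁ hp₂ h).integrable_comp_abs

lemma integral_min_two_sq_mul_abs_rpow_comp_mul {p : ℝ} (hp : p ≠ -1) (h : ℝ) :
    ∫ ξ : ℝ, min 2 ((h * ξ) ^ 2) * |ξ| ^ p = |h| ^ (-1 - p) * ∫ ξ : ℝ, min 2 (ξ ^ 2) * |ξ| ^ p := by
  rcases eq_or_ne h 0 with rfl | hh
  · simp [zero_rpow (show -1 - p ≠ 0 by contrapose! hp; linarith)]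
  have hh' : 0 < |h| := abs_pos.2 hh
  have hrescale : ∀ ξ : ℝ, min 2 ((h * ξ) ^ 2) * |ξ| ^ p
      = |h| ^ (-p) * (min 2 ((h * ξ) ^ 2) * |h * ξ| ^ p) := by
    intro ξ
    rw [abs_mul, mul_rpow (abs_nonneg _) (abs_nonneg _), mul_left_comm, ← mul_assoc (|h| ^ (-p)),
      ← rpow_add hh', neg_add_cancel, rpow_zero, one_mul]
  simp_rw [hrescale]
  rw [integral_const_mul, Measure.integral_comp_mul_left (fun u => min 2 (u ^ 2) * |u| ^ p) h,
    smul_eq_mul, ← mul_assoc, abs_inv, ← rpow_neg_one, ← rpow_add hh']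
  ring_nf

lemma lintegral_Ioi_exp_neg_mul {b : ℝ} (hb : 0 < b) :
    ∫⁻ s in Ioi (0 : ℝ), ENNReal.ofReal (exp (-b * s)) = ENNReal.ofReal b⁻¹ := by
  rw [← ofReal_integral_eq_lintegral_ofReal (exp_neg_integrableOn_Ioi 0 hb)
    (ae_of_all _ fun s => (exp_pos _).le), integral_exp_mul_Ioi (by linarith) 0]
  congr 1
  field_simp
  simp

lemma lintegral_Ioi_lintegral_mul_exp_neg_mul_sq {g : ℝ → ℝ} (hg : Measurable g)
    (hg₀ : ∀ ξ, 0 ≤ g ξ) :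
    ∫⁻ s in Ioi (0 : ℝ), ∫⁻ ξ, ENNReal.ofReal (g ξ * exp (-(s * ξ ^ 2)))
      = ∫⁻ ξ, ENNReal.ofReal (g ξ / ξ ^ 2) := by
  rw [lintegral_lintegral_swap (by fun_prop)]
  refine lintegral_congr_ae ?_
  filter_upwards [compl_mem_ae_iff.2 (measure_singleton (0 : ℝ))] with ξ (hξ : ξ ≠ 0)
  have hexp : ∀ s : ℝ, exp (-(s * ξ ^ 2)) = exp (-ξ ^ 2 * s) := fun s => by ring_nf
  simp_rw [hexp, ENNReal.ofReal_mul (hg₀ ξ)]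
  rw [lintegral_const_mul' _ _ ENNReal.ofReal_ne_top, lintegral_Ioi_exp_neg_mul (by positivity),
    ← ENNReal.ofReal_mul (hg₀ ξ), div_eq_mul_inv]

lemma integral_integral_one_sub_cos_mul_exp_le {q : ℝ} (hq₁ : -1 < q) (hq₂ : q < 1) (h : ℝ)
    {t : ℝ} (ht : 0 ≤ t) :
    ∫ s in (0 : ℝ)..t, ∫ ξ : ℝ, (1 - cos (h * ξ)) * exp (-(s * ξ ^ 2)) * |ξ| ^ q
      ≤ ∫ ξ : ℝ, min 2 ((h * ξ) ^ 2) * |ξ| ^ (q - 2) := by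
  have hF₀ : ∀ s ξ : ℝ, 0 ≤ (1 - cos (h * ξ)) * exp (-(s * ξ ^ 2)) * |ξ| ^ q := fun s ξ =>
    mul_nonneg (mul_nonneg (sub_nonneg.2 (cos_le_one _)) (exp_pos _).le) (by positivity)
  have hF_le : ∀ s ξ : ℝ, (1 - cos (h * ξ)) * exp (-(s * ξ ^ 2)) * |ξ| ^ q
      ≤ min 2 ((h * ξ) ^ 2) * |ξ| ^ q * exp (-(s * ξ ^ 2)) := fun s ξ => by
    rw [mul_right_comm]
    gcongr
    exact one_sub_cos_le_min_two_sq _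
  rw [intervalIntegral.integral_of_le ht, ← ENNReal.ofReal_le_ofReal_iff (integral_nonneg
    fun ξ => by positivity), ofReal_integral_eq_lintegral_ofReal
    (integrable_min_two_sq_mul_abs_rpow (by linarith) (by linarith) h)
    (ae_of_all _ fun ξ => by positivity)]
  -- Passing to lower integrals avoids proving that `s ↦ ∫ ξ, …` is measurable.
  calc ENNReal.ofReal (∫ s in Ioc 0 t, ∫ ξ, (1 - cos (h * ξ)) * exp (-(s * ξ ^ 2)) * |ξ| ^ q)
      ≤ ∫⁻ s in Ioc 0 t, ∫⁻ ξ, ENNReal.ofReal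
          ((1 - cos (h * ξ)) * exp (-(s * ξ ^ 2)) * |ξ| ^ q) :=
        (ofReal_integral_le_lintegral_ofReal fun s => integral_nonneg (hF₀ s)).trans
          (lintegral_mono fun s => ofReal_integral_le_lintegral_ofReal (hF₀ s))
    _ ≤ ∫⁻ s in Ioi 0, ∫⁻ ξ, ENNReal.ofReal
          (min 2 ((h * ξ) ^ 2) * |ξ| ^ q * exp (-(s * ξ ^ 2))) :=
        (lintegral_mono fun s => lintegral_mono fun ξ => ENNReal.ofReal_le_ofReal (hF_le s ξ)).trans
          (lintegral_mono_set Ioc_subset_Ioi_self)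
    _ = ∫⁻ ξ, ENNReal.ofReal (min 2 ((h * ξ) ^ 2) * |ξ| ^ q / ξ ^ 2) :=
        lintegral_Ioi_lintegral_mul_exp_neg_mul_sq (by fun_prop) fun ξ => by positivity
    _ = ∫⁻ ξ, ENNReal.ofReal (min 2 ((h * ξ) ^ 2) * |ξ| ^ (q - 2)) := by
        simp_rw [mul_div_assoc, abs_rpow_div_sq (by linarith : q ≠ 2)]

theorem stmt_12 (H : ℝ) (hH : H ∈ Set.Ioo (0:ℝ) (1/2 : ℝ)) :
    ∃ C : ℝ, 0 < C ∧ ∀ h t : ℝ, 0 < t →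
      ∫ s in (0:ℝ)..t, ∫ ξ : ℝ,
          (1 - Real.cos (h * ξ)) * Real.exp (-(s * ξ^2)) * |ξ| ^ (1 - 2*H)
        ≤ C * |h| ^ (2*H) := by
  obtain ⟨hH₀, hH₁⟩ := hH
  set C₀ := ∫ ξ : ℝ, min 2 (ξ ^ 2) * |ξ| ^ (-1 - 2 * H)
  have hC₀ : 0 ≤ C₀ := integral_nonneg fun ξ => by positivity
  refine ⟨C₀ + 1, by linarith, fun h t ht => ?_⟩
  calc _ ≤ ∫ ξ : ℝ, min 2 ((h * ξ) ^ 2) * |ξ| ^ (1 - 2 * H - 2) :=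
        integral_integral_one_sub_cos_mul_exp_le (by linarith) (by linarith) h ht.le
    _ = |h| ^ (2 * H) * C₀ := by
        rw [show 1 - 2 * H - 2 = -1 - 2 * H by ring,
          integral_min_two_sq_mul_abs_rpow_comp_mul (by linarith), sub_sub_cancel]
    _ ≤ (C₀ + 1) * |h| ^ (2 * H) := by nlinarith [rpow_nonneg (abs_nonneg h) (2 * H)]
end

section
/- Let H ∈ (0, 1/2). There exists a constant C > 0 depending only on H and T such that for all h ∈ ℝ and all t ∈ (0, T], ∫_0^t ∫_ℝ (1 - cos(hξ)) · (sin((t-s)|ξ|)/|ξ|)² |ξ|^{1-2H} dξ ds ≤ C |h|^{2H}. -/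
/-!
The factor `(sin (τ|ξ|)/|ξ|)²` is at most `ξ⁻²`, and `1 - cos (hξ)` is at most both `h²ξ²/2`
and `2`. Hence the inner integrand is dominated by `h²/2 · |ξ|^(1-2H)` and by `2 |ξ|^(-1-2H)`;
splitting the frequency line at `|ξ| = |h|⁻¹`, the first power is integrable near the origin and
the second at infinity, and both pieces scale like `|h|^(2H)`. Integrating in time costs a
factor `t ≤ T`.
-/

open MeasureTheory Real Set

noncomputable def brokenPowerLaw (a p b q R : ℝ) (x : ℝ) : ℝ :=
  if x ≤ R then a * x ^ p else b * x ^ q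

section BrokenPowerLaw

variable {p q R x : ℝ} (a b : ℝ)

theorem brokenPowerLaw_of_le (hx : x ≤ R) : brokenPowerLaw a p b q R x = a * x ^ p := if_pos hx

theorem brokenPowerLaw_of_lt (hx : R < x) : brokenPowerLaw a p b q R x = b * x ^ q :=
  if_neg (not_le.mpr hx)

theorem integrableOn_Ioc_brokenPowerLaw (hp : -1 < p) (hR : 0 < R) :
    IntegrableOn (brokenPowerLaw a p b q R) (Ioc 0 R) := by
  have hpow : IntegrableOn (fun x : ℝ => a * x ^ p) (Ioc 0 R) :=
    (intervalIntegrable_iff_integrableOn_Ioc_of_le hR.le).mp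
      ((intervalIntegral.intervalIntegrable_rpow' hp).const_mul a)
  exact hpow.congr_fun (fun _ hx => (brokenPowerLaw_of_le a b hx.2).symm) measurableSet_Ioc

theorem integrableOn_Ioi_brokenPowerLaw (hq : q < -1) (hR : 0 < R) :
    IntegrableOn (brokenPowerLaw a p b q R) (Ioi R) :=
  IntegrableOn.congr_fun ((integrableOn_Ioi_rpow_of_lt hq hR).const_mul b)
    (fun _ hx => (brokenPowerLaw_of_lt a b hx).symm) measurableSet_Ioi

theorem integrableOn_Ioi_zero_brokenPowerLaw (hp : -1 < p) (hq : q < -1) (hR : 0 < R) :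
    IntegrableOn (brokenPowerLaw a p b q R) (Ioi 0) := by
  rw [← Ioc_union_Ioi_eq_Ioi hR.le]
  exact (integrableOn_Ioc_brokenPowerLaw a b hp hR).union
    (integrableOn_Ioi_brokenPowerLaw a b hq hR)

theorem integral_Ioi_zero_brokenPowerLaw (hp : -1 < p) (hq : q < -1) (hR : 0 < R) :
    ∫ x in Ioi 0, brokenPowerLaw a p b q R x
      = a * R ^ (p + 1) / (p + 1) - b * R ^ (q + 1) / (q + 1) := by
  rw [← Ioc_union_Ioi_eq_Ioi hR.le,
    setIntegral_union (Ioc_disjoint_Ioi le_rfl) measurableSet_Ioi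
    (integrableOn_Ioc_brokenPowerLaw a b hp hR) (integrableOn_Ioi_brokenPowerLaw a b hq hR)]
  have hnear : ∫ x in Ioc 0 R, brokenPowerLaw a p b q R x = a * R ^ (p + 1) / (p + 1) := by
    rw [setIntegral_congr_fun measurableSet_Ioc (fun _ hx => brokenPowerLaw_of_le a b hx.2),
      integral_const_mul,
      ← intervalIntegral.integral_of_le hR.le, integral_rpow (Or.inl hp),
      zero_rpow (by linarith), sub_zero, mul_div_assoc]
  have hfar : ∫ x in Ioi R, brokenPowerLaw a p b q R x = -(b * R ^ (q + 1) / (q + 1)) := by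
    rw [setIntegral_congr_fun measurableSet_Ioi (fun _ hx => brokenPowerLaw_of_lt a b hx),
      integral_const_mul, integral_Ioi_rpow_of_lt hq hR]
    ring
  rw [hnear, hfar, sub_eq_add_neg]

end BrokenPowerLaw

theorem integrable_comp_abs_of_integrableOn_Ioi {f : ℝ → ℝ} (hf : IntegrableOn f (Ioi 0)) :
    Integrable (fun x => f |x|) := by
  have hpos : IntegrableOn (fun x => f |x|) (Ioi 0) :=
    hf.congr_fun (fun x hx => by rw [abs_of_pos hx]) measurableSet_Ioi
  have hneg : IntegrableOn (fun x => f |x|) (Iic 0) := by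
    have hneg_emb : MeasurableEmbedding fun x : ℝ => -x :=
      (Homeomorph.neg ℝ).measurableEmbedding
    rw [← Measure.map_neg_eq_self (volume : Measure ℝ), hneg_emb.integrableOn_map_iff]
    simp_rw [Function.comp_def, abs_neg, neg_preimage, neg_Iic, neg_zero]
    exact (integrableOn_Ici_iff_integrableOn_Ioi).mpr hpos
  simpa [Iic_union_Ioi] using hneg.union hpos

theorem integral_le_of_le_rpow_abs {g : ℝ → ℝ} {a b p q R : ℝ} (hp : -1 < p) (hq : q < -1)
    (hR : 0 < R) (hg_nonneg : ∀ ξ, 0 ≤ g ξ) (hg_near : ∀ ξ, g ξ ≤ a * |ξ| ^ p)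
    (hg_far : ∀ ξ, g ξ ≤ b * |ξ| ^ q) :
    ∫ ξ, g ξ ≤ 2 * (a * R ^ (p + 1) / (p + 1) - b * R ^ (q + 1) / (q + 1)) := by
  have hdom : ∀ ξ, g ξ ≤ brokenPowerLaw a p b q R |ξ| := fun ξ => by
    unfold brokenPowerLaw
    split_ifs
    exacts [hg_near ξ, hg_far ξ]
  calc ∫ ξ, g ξ ≤ ∫ ξ, brokenPowerLaw a p b q R |ξ| :=
        integral_mono_of_nonneg (.of_forall hg_nonneg)
          (integrable_comp_abs_of_integrableOn_Ioi
            (integrableOn_Ioi_zero_brokenPowerLaw a b hp hq hR)) (.of_forall hdom)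
    _ = _ := by rw [integral_comp_abs, integral_Ioi_zero_brokenPowerLaw a b hp hq hR]

section SpectralIncrement

variable (h τ ξ : ℝ)

theorem one_sub_cos_le_sq_div_two (x : ℝ) : 1 - cos x ≤ x ^ 2 / 2 := by
  linarith [one_sub_sq_div_two_le_cos (x := x)]

theorem sin_mul_abs_div_abs_sq_le : (sin (τ * |ξ|) / |ξ|) ^ 2 ≤ 1 / ξ ^ 2 := by
  rw [div_pow, sq_abs]
  exact div_le_div_of_nonneg_right (sin_sq_le_one _) (sq_nonneg ξ)

theorem spectralIncrement_nonneg (α : ℝ) :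
    0 ≤ (1 - cos (h * ξ)) * (sin (τ * |ξ|) / |ξ|) ^ 2 * |ξ| ^ α :=
  mul_nonneg (mul_nonneg (by linarith [cos_le_one (h * ξ)]) (sq_nonneg _))
    (rpow_nonneg (abs_nonneg ξ) α)

theorem spectralIncrement_le_sq_mul_rpow (α : ℝ) :
    (1 - cos (h * ξ)) * (sin (τ * |ξ|) / |ξ|) ^ 2 * |ξ| ^ α ≤ h ^ 2 / 2 * |ξ| ^ α := by
  refine mul_le_mul_of_nonneg_right ?_ (rpow_nonneg (abs_nonneg ξ) α)
  rcases eq_or_ne ξ 0 with rfl | hξ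
  · simp only [mul_zero, cos_zero, sub_self, zero_mul]
    positivity
  calc (1 - cos (h * ξ)) * (sin (τ * |ξ|) / |ξ|) ^ 2 ≤ (h * ξ) ^ 2 / 2 * (1 / ξ ^ 2) :=
        mul_le_mul (one_sub_cos_le_sq_div_two _) (sin_mul_abs_div_abs_sq_le τ ξ) (sq_nonneg _)
          (by positivity)
    _ = h ^ 2 / 2 := by field_simp

theorem spectralIncrement_le_two_mul_rpow (α : ℝ) :
    (1 - cos (h * ξ)) * (sin (τ * |ξ|) / |ξ|) ^ 2 * |ξ| ^ α ≤ 2 * |ξ| ^ (α - 2) := by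
  rcases eq_or_ne ξ 0 with rfl | hξ
  · simp only [mul_zero, cos_zero, sub_self, zero_mul]
    positivity
  calc (1 - cos (h * ξ)) * (sin (τ * |ξ|) / |ξ|) ^ 2 * |ξ| ^ α
        ≤ 2 * (1 / ξ ^ 2) * |ξ| ^ α := by
        gcongr
        · linarith [neg_one_le_cos (h * ξ)]
        · exact sin_mul_abs_div_abs_sq_le τ ξ
    _ = 2 * |ξ| ^ (α - 2) := by
        rw [rpow_sub (abs_pos.mpr hξ), rpow_two, sq_abs]
        ring

end SpectralIncrement

theorem integral_spectralIncrement_le {H : ℝ} (hH0 : 0 < H) (hH1 : H < 1) (h τ : ℝ) :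
    ∫ ξ, (1 - cos (h * ξ)) * (sin (τ * |ξ|) / |ξ|) ^ 2 * |ξ| ^ (1 - 2 * H)
      ≤ (1 / (2 - 2 * H) + 2 / H) * |h| ^ (2 * H) := by
  rcases eq_or_ne h 0 with rfl | hh
  · simp [zero_rpow (by positivity : 2 * H ≠ 0)]
  have hh' : 0 < |h| := abs_pos.mpr hh
  refine (integral_le_of_le_rpow_abs (R := |h|⁻¹) (by linarith) (by linarith) (inv_pos.mpr hh')
    (spectralIncrement_nonneg h τ · _) (spectralIncrement_le_sq_mul_rpow h τ · _)
    (spectralIncrement_le_two_mul_rpow h τ · _)).trans_eq ?_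
  have hnear : |h|⁻¹ ^ (1 - 2 * H + 1) = |h| ^ (2 * H) / h ^ 2 := by
    rw [inv_rpow (abs_nonneg h), ← rpow_neg (abs_nonneg h), ← sq_abs, ← rpow_two,
      ← rpow_sub hh']
    ring_nf
  have hfar : |h|⁻¹ ^ (1 - 2 * H - 2 + 1) = |h| ^ (2 * H) := by
    rw [inv_rpow (abs_nonneg h), ← rpow_neg (abs_nonneg h)]
    ring_nf
  have h2H : 2 - 2 * H ≠ 0 := by linarith
  rw [hnear, hfar, show 1 - 2 * H + 1 = 2 - 2 * H by ring,
    show 1 - 2 * H - 2 + 1 = -(2 * H) by ring]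
  field_simp
  ring

theorem stmt_13 (H T : ℝ) (hH : H ∈ Set.Ioo (0:ℝ) (1/2 : ℝ)) (hT : 0 < T) :
    ∃ C : ℝ, 0 < C ∧ ∀ h : ℝ, ∀ t ∈ Set.Ioc (0:ℝ) T,
      ∫ s in (0:ℝ)..t, ∫ ξ : ℝ,
          (1 - Real.cos (h * ξ)) * (Real.sin ((t-s) * |ξ|) / |ξ|)^2 * |ξ| ^ (1 - 2*H)
        ≤ C * |h| ^ (2*H) := by
  obtain ⟨hH0, hH1⟩ := hH
  set K := 1 / (2 - 2 * H) + 2 / H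
  have hK : 0 < K := add_pos (one_div_pos.mpr (by linarith)) (div_pos two_pos hH0)
  refine ⟨T * K, mul_pos hT hK, fun h t ⟨ht0, htT⟩ => ?_⟩
  have hinner : ∀ s, ‖∫ ξ : ℝ,
      (1 - cos (h * ξ)) * (sin ((t - s) * |ξ|) / |ξ|) ^ 2 * |ξ| ^ (1 - 2 * H)‖
        ≤ K * |h| ^ (2 * H) := fun s => by
    rw [norm_of_nonneg (integral_nonneg fun ξ => spectralIncrement_nonneg h (t - s) ξ _)]
    exact integral_spectralIncrement_le hH0 (by linarith) h (t - s)
  -- bounding through the norm avoids proving that the inner integral is integrable in `s`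
  calc _ ≤ ‖_‖ := le_norm_self _
    _ ≤ K * |h| ^ (2 * H) * |t - 0| :=
        intervalIntegral.norm_integral_le_of_norm_le_const fun s _ => hinner s
    _ ≤ T * K * |h| ^ (2 * H) := by
        rw [sub_zero, abs_of_pos ht0, mul_comm, mul_assoc]
        gcongr
end
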